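/- arXiv:2506.00542 — 8 statements merged into one kernel-verified Lean document; each statement's English description precedes it below -/
import Mathlib

section
/- Let λ₁, λ₂ ∈ V be regular with P^{λ₁} = P^{λ₂}, and assume at least one of λ₁, λ₂ satisfies condition (⋆). Then for every integer k ≥ 1, the vector λ₁ + kλ₂ is regular, P^{λ₁+kλ₂} = P^{λ₁}, and λ₁ + kλ₂ satisfies condition (⋆). (Paper's Lemma 2.4.3: if the base or the direction of a string belongs to D*(G), then every linear form in the string S(λ₁,λ₂) belongs to D*(G) and determines the same positive system.) -/
open scoped Classical RealInnerProductSpace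

variable {V : Type*} [NormedAddCommGroup V] [InnerProductSpace ℝ V]

/-- `P^μ`: the set of roots pairing positively with `μ`. -/
noncomputable def posSys (Φ : Finset V) (μ : V) : Finset V :=
  Φ.filter fun α => 0 < ⟪μ, α⟫

/-- `μ` is regular: it pairs nontrivially with every root. -/
def IsRegularWrt (Φ : Finset V) (μ : V) : Prop :=
  ∀ α ∈ Φ, ⟪μ, α⟫ ≠ 0

/-- `δ^μ = (1/2) ∑_{α ∈ P^μ} α`. -/
noncomputable def halfSumPos (Φ : Finset V) (μ : V) : V :=
  (1 / 2 : ℝ) • ∑ α ∈ posSys Φ μ, α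

/-- Condition (⋆): `⟨μ - δ^μ, α⟩ > 0` for all `α ∈ P^μ ∩ Φₙ`. -/
def StarCond (Φ Φn : Finset V) (μ : V) : Prop :=
  ∀ α ∈ posSys Φ μ ∩ Φn, 0 < ⟪μ - halfSumPos Φ μ, α⟫

theorem star_string (Φ Φn : Finset V) [FiniteDimensional ℝ V]
    (hΦn : Φn ⊆ Φ) (hΦ0 : (0 : V) ∉ Φ)
    (l₁ l₂ : V) (hreg₁ : IsRegularWrt Φ l₁) (hreg₂ : IsRegularWrt Φ l₂)
    (hP : posSys Φ l₁ = posSys Φ l₂)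
    (hstar : StarCond Φ Φn l₁ ∨ StarCond Φ Φn l₂)
    (k : ℕ) (hk : 1 ≤ k) :
    IsRegularWrt Φ (l₁ + (k : ℝ) • l₂) ∧
      posSys Φ (l₁ + (k : ℝ) • l₂) = posSys Φ l₁ ∧
      StarCond Φ Φn (l₁ + (k : ℝ) • l₂) := by
  have hsign : ∀ α ∈ Φ, (0 < ⟪l₁, α⟫ ↔ 0 < ⟪l₂, α⟫) := by
    intro α hα
    constructor <;> intro h
    · have h1 : α ∈ posSys Φ l₂ := hP ▸ (Finset.mem_filter.mpr ⟨hα, h⟩)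
      exact (Finset.mem_filter.mp h1).2
    · have h1 : α ∈ posSys Φ l₁ := hP.symm ▸ (Finset.mem_filter.mpr ⟨hα, h⟩)
      exact (Finset.mem_filter.mp h1).2
  have hk' : (1:ℝ) ≤ (k:ℝ) := by exact_mod_cast hk
  have hinner : ∀ α : V, ⟪l₁ + (k:ℝ)•l₂, α⟫ = ⟪l₁,α⟫ + (k:ℝ)*⟪l₂,α⟫ := by
    intro α; rw [inner_add_left, real_inner_smul_left]
  have key : ∀ α ∈ Φ, (0 < ⟪l₁ + (k:ℝ)•l₂, α⟫ ↔ 0 < ⟪l₁, α⟫) ∧ ⟪l₁ + (k:ℝ)•l₂, α⟫ ≠ 0 := by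
    intro α hα
    have h1 := hreg₁ α hα
    have h2 := hreg₂ α hα
    rw [hinner]
    rcases lt_or_gt_of_ne h1 with hneg | hpos
    · have h2n : ⟪l₂,α⟫ < 0 := by
        rcases lt_or_gt_of_ne h2 with h | h
        · exact h
        · exact absurd ((hsign α hα).mpr h) (not_lt.mpr hneg.le)
      have hh : ⟪l₁,α⟫ + (k:ℝ)*⟪l₂,α⟫ < 0 := by nlinarith
      exact ⟨by constructor <;> intro h <;> linarith, by linarith⟩
    · have h2p : 0 < ⟪l₂,α⟫ := (hsign α hα).mp hpos
      have hh : 0 < ⟪l₁,α⟫ + (k:ℝ)*⟪l₂,α⟫ := by nlinarith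
      exact ⟨by constructor <;> intro h <;> linarith, by linarith⟩
  have hregS : IsRegularWrt Φ (l₁ + (k:ℝ)•l₂) := fun α hα => (key α hα).2
  have hPS : posSys Φ (l₁ + (k:ℝ)•l₂) = posSys Φ l₁ := by
    ext α
    simp only [posSys, Finset.mem_filter, and_congr_right_iff]
    exact fun hα => (key α hα).1
  refine ⟨hregS, hPS, ?_⟩
  have hδS : halfSumPos Φ (l₁ + (k:ℝ)•l₂) = halfSumPos Φ l₁ := by
    unfold halfSumPos; rw [hPS]
  have hδ2 : halfSumPos Φ l₂ = halfSumPos Φ l₁ := by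
    unfold halfSumPos; rw [hP]
  intro α hα
  rw [hδS]
  have hα' : α ∈ posSys Φ l₁ ∩ Φn := by rwa [hPS] at hα
  have hαΦ : α ∈ Φ := (Finset.mem_filter.mp (Finset.mem_inter.mp hα').1).1
  have hl₁ : 0 < ⟪l₁, α⟫ := (Finset.mem_filter.mp (Finset.mem_inter.mp hα').1).2
  have hl₂ : 0 < ⟪l₂, α⟫ := (hsign α hαΦ).mp hl₁
  have expand : ⟪l₁ + (k:ℝ)•l₂ - halfSumPos Φ l₁, α⟫
      = ⟪l₁ - halfSumPos Φ l₁, α⟫ + (k:ℝ)*⟪l₂,α⟫ := by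
    rw [inner_sub_left, hinner, inner_sub_left]; ring
  rcases hstar with hs | hs
  · have := hs α hα'
    rw [inner_sub_left] at this
    rw [expand, inner_sub_left]
    nlinarith
  · have hα'' : α ∈ posSys Φ l₂ ∩ Φn := by rwa [hP] at hα'
    have := hs α hα''
    rw [inner_sub_left, hδ2] at this
    rw [expand, inner_sub_left]
    nlinarith
end

section
/- Let λ₁, …, λ_n ∈ V (n ≥ 1) be regular vectors with P^{λ_r} = P^{λ_1} for all 1 ≤ r ≤ n, and assume λ₁ satisfies condition (⋆). Then for every tuple (k₁, …, k_n) of natural numbers with k₁ ≥ 1, the vector μ := k₁λ₁ + ⋯ + k_nλ_n is regular, P^μ = P^{λ_1}, and μ satisfies condition (⋆). (Paper's Lemma 4.3.2 on multi-directed strings, with the coefficient of the (⋆)-direction required to be positive.) -/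
open scoped Classical RealInnerProductSpace

variable {V : Type*} [NormedAddCommGroup V] [InnerProductSpace ℝ V]

theorem star_multiString (Φ Φn : Finset V) [FiniteDimensional ℝ V]
    (hΦn : Φn ⊆ Φ) (hΦ0 : (0 : V) ∉ Φ)
    (n : ℕ) (hn : 1 ≤ n) (lam : Fin n → V)
    (hreg : ∀ r, IsRegularWrt Φ (lam r))
    (hP : ∀ r, posSys Φ (lam r) = posSys Φ (lam ⟨0, hn⟩))
    (hstar : StarCond Φ Φn (lam ⟨0, hn⟩))
    (k : Fin n → ℕ) (hk : 1 ≤ k ⟨0, hn⟩) :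
    IsRegularWrt Φ (∑ i, (k i : ℝ) • lam i) ∧
      posSys Φ (∑ i, (k i : ℝ) • lam i) = posSys Φ (lam ⟨0, hn⟩) ∧
      StarCond Φ Φn (∑ i, (k i : ℝ) • lam i) := by
  set z : Fin n := ⟨0, hn⟩ with hz
  set μ : V := ∑ i, (k i : ℝ) • lam i with hμ
  set P : Finset V := posSys Φ (lam z) with hPdef
  have key : ∀ α : V, ⟪μ, α⟫ = ∑ i, (k i : ℝ) * ⟪lam i, α⟫ := by
    intro α
    simp [hμ, sum_inner, real_inner_smul_left]
  have hpos : ∀ α ∈ P, ∀ i, 0 < ⟪lam i, α⟫ := by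
    intro α hα i
    have h1 : α ∈ posSys Φ (lam i) := by rw [hP i]; exact hα
    exact (Finset.mem_filter.mp h1).2
  have hneg : ∀ α ∈ Φ, α ∉ P → ∀ i, ⟪lam i, α⟫ < 0 := by
    intro α hα hαP i
    have hne := hreg i α hα
    have hnlt : ¬ 0 < ⟪lam i, α⟫ := by
      intro h
      exact hαP (hP i ▸ Finset.mem_filter.mpr ⟨hα, h⟩)
    exact lt_of_le_of_ne (not_lt.mp hnlt) hne
  have hge : ∀ α ∈ P, ⟪lam z, α⟫ ≤ ⟪μ, α⟫ := by
    intro α hα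
    rw [key α]
    calc ⟪lam z, α⟫ ≤ (k z : ℝ) * ⟪lam z, α⟫ := by
          have := hpos α hα z
          nlinarith [show (1:ℝ) ≤ (k z : ℝ) by exact_mod_cast hk]
      _ ≤ ∑ i, (k i : ℝ) * ⟪lam i, α⟫ :=
          Finset.single_le_sum (f := fun i => (k i : ℝ) * ⟪lam i, α⟫)
            (fun i _ => mul_nonneg (Nat.cast_nonneg _) (hpos α hα i).le)
            (Finset.mem_univ z)
  have hle : ∀ α ∈ Φ, α ∉ P → ⟪μ, α⟫ < 0 := by
    intro α hα hαP
    rw [key α]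
    have h0 : (k z : ℝ) * ⟪lam z, α⟫ < 0 :=
      mul_neg_of_pos_of_neg (by exact_mod_cast hk) (hneg α hα hαP z)
    have hsum : -((k z : ℝ) * ⟪lam z, α⟫) ≤ ∑ i, -((k i : ℝ) * ⟪lam i, α⟫) :=
      Finset.single_le_sum (f := fun i => -((k i : ℝ) * ⟪lam i, α⟫))
        (fun i _ => by
          simpa using neg_nonneg.mpr
            (mul_nonpos_of_nonneg_of_nonpos (Nat.cast_nonneg _) (hneg α hα hαP i).le))
        (Finset.mem_univ z)
    rw [Finset.sum_neg_distrib] at hsum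
    linarith
  have hPz : ∀ α ∈ P, 0 < ⟪lam z, α⟫ := fun α hα => hpos α hα z
  have hreg' : IsRegularWrt Φ μ := by
    intro α hα
    by_cases h : α ∈ P
    · exact (lt_of_lt_of_le (hPz α h) (hge α h)).ne'
    · exact (hle α hα h).ne
  have hposSys : posSys Φ μ = P := by
    ext α
    simp only [posSys, Finset.mem_filter]
    constructor
    · rintro ⟨hα, hlt⟩
      by_contra hc
      exact absurd hlt (not_lt.mpr (hle α hα hc).le)
    · intro hα
      refine ⟨Finset.mem_filter.mp hα |>.1, lt_of_lt_of_le (hPz α hα) (hge α hα)⟩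
  refine ⟨hreg', hposSys, ?_⟩
  intro α hα
  have hδ : halfSumPos Φ μ = halfSumPos Φ (lam z) := by
    rw [halfSumPos, halfSumPos, hposSys]
  rw [Finset.mem_inter, hposSys] at hα
  have hst := hstar α (Finset.mem_inter.mpr hα)
  rw [hδ, inner_sub_left] at *
  have := hge α hα.1
  linarith
end

section
/- Let λ₁, λ₂ ∈ V be regular with P^{λ₁} = P^{λ₂}, and assume λ₁ satisfies condition (⋆). Then there exists k ∈ ℕ such that for every integer m > k, the vector mλ₁ − λ₂ is regular, P^{mλ₁ − λ₂} = P^{λ₁}, and mλ₁ − λ₂ satisfies condition (⋆). (The key step in the proof of Proposition 4.6 of the paper.) -/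
open scoped Classical RealInnerProductSpace

variable {V : Type*} [NormedAddCommGroup V] [InnerProductSpace ℝ V]

theorem star_sub_direction (Φ Φn : Finset V) [FiniteDimensional ℝ V]
    (hΦn : Φn ⊆ Φ) (hΦ0 : (0 : V) ∉ Φ)
    (l₁ l₂ : V) (hreg₁ : IsRegularWrt Φ l₁) (hreg₂ : IsRegularWrt Φ l₂)
    (hP : posSys Φ l₁ = posSys Φ l₂)
    (hstar : StarCond Φ Φn l₁) :
    ∃ k : ℕ, ∀ m : ℕ, k < m →
      IsRegularWrt Φ ((m : ℝ) • l₁ - l₂) ∧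
        posSys Φ ((m : ℝ) • l₁ - l₂) = posSys Φ l₁ ∧
        StarCond Φ Φn ((m : ℝ) • l₁ - l₂) := by

  classical
  set C : ℝ := ∑ α ∈ Φ, |⟪l₂, α⟫| / |⟪l₁, α⟫| with hCdef
  have hCle : ∀ α ∈ Φ, |⟪l₂, α⟫| ≤ C * |⟪l₁, α⟫| := by
    intro α hα
    have h1 : (0:ℝ) < |⟪l₁, α⟫| := abs_pos.mpr (hreg₁ α hα)
    have h2 : |⟪l₂, α⟫| / |⟪l₁, α⟫| ≤ C :=
      Finset.single_le_sum (f := fun α => |⟪l₂, α⟫| / |⟪l₁, α⟫|)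
        (fun i _ => div_nonneg (abs_nonneg _) (abs_nonneg _)) hα
    have := (div_le_iff₀ h1).mp h2
    linarith
  have hsign : ∀ α ∈ Φ, (0 < ⟪l₁, α⟫ ↔ 0 < ⟪l₂, α⟫) := by
    intro α hα
    have := Finset.ext_iff.mp hP α
    simp only [posSys, Finset.mem_filter, hα, true_and] at this
    exact this
  refine ⟨⌈C⌉₊ + 1, fun m hm => ?_⟩
  have hmC : C + 1 < (m : ℝ) := by
    have h1 : C ≤ (⌈C⌉₊ : ℝ) := Nat.le_ceil C
    have h2 : (⌈C⌉₊ + 1 : ℕ) < m := hm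
    have h3 : ((⌈C⌉₊ : ℝ) + 1) + 1 ≤ (m : ℝ) := by exact_mod_cast h2
    linarith
  have hinner : ∀ α : V, ⟪(m : ℝ) • l₁ - l₂, α⟫ = (m:ℝ) * ⟪l₁, α⟫ - ⟪l₂, α⟫ := by
    intro α; rw [inner_sub_left, real_inner_smul_left]
  have hpos : ∀ α ∈ Φ, 0 < ⟪l₁, α⟫ → 0 < ⟪(m : ℝ) • l₁ - l₂, α⟫ := by
    intro α hα ha
    have hb := hCle α hα
    rw [abs_of_pos ha] at hb
    have hb2 : ⟪l₂, α⟫ ≤ |⟪l₂, α⟫| := le_abs_self _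
    rw [hinner]; nlinarith
  have hneg : ∀ α ∈ Φ, ⟪l₁, α⟫ < 0 → ⟪(m : ℝ) • l₁ - l₂, α⟫ < 0 := by
    intro α hα ha
    have hb := hCle α hα
    rw [abs_of_neg ha] at hb
    have hb2 : -⟪l₂, α⟫ ≤ |⟪l₂, α⟫| := neg_le_abs _
    rw [hinner]; nlinarith
  have hPeq : posSys Φ ((m : ℝ) • l₁ - l₂) = posSys Φ l₁ := by
    ext α
    simp only [posSys, Finset.mem_filter, and_congr_right_iff]
    intro hα
    constructor
    · intro h
      rcases lt_trichotomy ⟪l₁, α⟫ 0 with h1 | h1 | h1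
      · exact absurd h (not_lt.mpr (hneg α hα h1).le)
      · exact absurd h1 (hreg₁ α hα)
      · exact h1
    · exact hpos α hα
  have hreg : IsRegularWrt Φ ((m : ℝ) • l₁ - l₂) := by
    intro α hα
    rcases lt_trichotomy ⟪l₁, α⟫ 0 with h1 | h1 | h1
    · exact (hneg α hα h1).ne
    · exact absurd h1 (hreg₁ α hα)
    · exact (hpos α hα h1).ne'
  refine ⟨hreg, hPeq, ?_⟩
  intro α hαm
  have hδ : halfSumPos Φ ((m : ℝ) • l₁ - l₂) = halfSumPos Φ l₁ := by
    unfold halfSumPos; rw [hPeq]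
  rw [hPeq] at hαm
  rw [hδ]
  have hα1 : α ∈ posSys Φ l₁ ∩ Φn := hαm
  have hαΦ : α ∈ Φ := (Finset.mem_filter.mp (Finset.mem_inter.mp hα1).1).1
  have ha : 0 < ⟪l₁, α⟫ := (Finset.mem_filter.mp (Finset.mem_inter.mp hα1).1).2
  have hs := hstar α hα1
  rw [inner_sub_left] at hs ⊢
  rw [hinner]
  have hb := hCle α hαΦ
  rw [abs_of_pos ha] at hb
  have hb2 : ⟪l₂, α⟫ ≤ |⟪l₂, α⟫| := le_abs_self _
  nlinarith
end

section
/- Let n ≥ 2 and let λ₁, …, λ_n ∈ V be linearly independent over ℚ, each regular, with P^{λ_r} = P^{λ_1} for all r, and with λ₁ satisfying condition (⋆). Let S(λ₁, …, λ_n) := { k₁λ₁ + ⋯ + k_nλ_n : (k₁, …, k_n) ∈ ℕⁿ \ {(0, …, 0)} }. Then there exist infinitely many μ ∈ V such that μ is regular, P^μ = P^{λ_1}, μ satisfies condition (⋆), and μ ∉ S(λ₁, …, λ_n). (Paper's Proposition 4.6.) -/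
open scoped Classical RealInnerProductSpace

variable {V : Type*} [NormedAddCommGroup V] [InnerProductSpace ℝ V]

theorem star_not_exhausted (Φ Φn : Finset V) [FiniteDimensional ℝ V]
    (hΦn : Φn ⊆ Φ) (hΦ0 : (0 : V) ∉ Φ)
    (n : ℕ) (hn : 2 ≤ n) (lam : Fin n → V)
    (hindep : ∀ c : Fin n → ℚ, ∑ i, (c i : ℝ) • lam i = 0 → c = 0)
    (hreg : ∀ r, IsRegularWrt Φ (lam r))
    (hP : ∀ r, posSys Φ (lam r) = posSys Φ (lam ⟨0, by omega⟩))
    (hstar : StarCond Φ Φn (lam ⟨0, by omega⟩)) :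
    {μ : V | IsRegularWrt Φ μ ∧ posSys Φ μ = posSys Φ (lam ⟨0, by omega⟩) ∧
      StarCond Φ Φn μ ∧
      ¬ ∃ k : Fin n → ℕ, k ≠ 0 ∧ μ = ∑ i, (k i : ℝ) • lam i}.Infinite := by
  have h0n : 0 < n := by omega
  set z : Fin n := ⟨0, by omega⟩ with hz
  set l0 := lam z with hl0def
  -- l0 ≠ 0
  have hl0ne : l0 ≠ 0 := by
    intro h
    have hc := hindep (fun i => if i = z then 1 else 0) ?_
    · have := congrFun hc z
      simp at this
    · rw [Finset.sum_eq_single z]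
      · norm_num
        exact h
      · intro b _ hb; simp [hb]
      · simp
  -- bad set of scalars
  set B : Set ℝ := {t | ∃ k : Fin n → ℕ, t • l0 = ∑ i, ((k i : ℝ)) • lam i} with hB
  have hinj : Function.Injective fun t : ℝ => t • l0 := smul_left_injective ℝ hl0ne
  have hBc : B.Countable := by
    have hsub : B ⊆ ⋃ k : Fin n → ℕ, {t : ℝ | t • l0 = ∑ i, ((k i : ℝ)) • lam i} := by
      rintro t ⟨k, hk⟩
      exact Set.mem_iUnion.2 ⟨k, hk⟩
    refine Set.Countable.mono hsub ?_
    refine Set.countable_iUnion fun k => Set.Subsingleton.countable ?_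
    intro a ha b hb
    exact hinj (ha.trans hb.symm)
  -- good scalar set
  set T : Set ℝ := Set.Ici (1 : ℝ) \ B with hT
  have hTinf : T.Infinite := by
    intro hfin
    have : (Set.Ici (1 : ℝ)).Countable := by
      have : Set.Ici (1 : ℝ) ⊆ T ∪ B := by
        intro t ht
        by_cases h : t ∈ B
        · exact Or.inr h
        · exact Or.inl ⟨ht, h⟩
      exact Set.Countable.mono this (hfin.countable.union hBc)
    have h1 := this.le_aleph0
    rw [Cardinal.mk_Ici_real] at h1
    exact absurd h1 (not_le.2 Cardinal.aleph0_lt_continuum)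
  -- map into the target set
  have himg : ∀ t ∈ T, (t • l0) ∈ {μ : V | IsRegularWrt Φ μ ∧ posSys Φ μ = posSys Φ (lam ⟨0, by omega⟩) ∧
      StarCond Φ Φn μ ∧
      ¬ ∃ k : Fin n → ℕ, k ≠ 0 ∧ μ = ∑ i, ((k i : ℝ)) • lam i} := by
    rintro t ⟨ht1, htB⟩
    have ht1' : (1 : ℝ) ≤ t := ht1
    have ht0 : (0 : ℝ) < t := lt_of_lt_of_le one_pos ht1'
    have hreg0 := hreg z
    have hposeq : posSys Φ (t • l0) = posSys Φ l0 := by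
      unfold posSys
      apply Finset.filter_congr
      intro α _
      rw [real_inner_smul_left]
      constructor
      · intro h; nlinarith
      · intro h; positivity
    refine ⟨?_, ?_, ?_, ?_⟩
    · intro α hα
      rw [real_inner_smul_left]
      exact mul_ne_zero (ne_of_gt ht0) (hreg0 α hα)
    · exact hposeq
    · intro α hα
      rw [hposeq] at hα
      have hstar0 := hstar α hα
      have hαpos : 0 < ⟪l0, α⟫ := (Finset.mem_filter.1 (Finset.mem_inter.1 hα).1).2
      have hδ : halfSumPos Φ (t • l0) = halfSumPos Φ l0 := by
        unfold halfSumPos; rw [hposeq]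
      rw [hδ, inner_sub_left, real_inner_smul_left]
      rw [inner_sub_left] at hstar0
      nlinarith
    · rintro ⟨k, hk0, hkeq⟩
      exact htB ⟨k, hkeq⟩
  have := (hTinf.image (Set.injOn_of_injective hinj)).mono (by
    rintro x ⟨t, htT, rfl⟩
    exact himg t htT)
  exact this
end

section
/- Let N ≥ 1 and n ≥ 0 be natural numbers and let p ∈ ℚ[X] be a polynomial with deg p < N(n+1), with coefficients b_i := coeff_i p. Let F ∈ ℚ⟦X⟧ satisfy (1 − X^N)^{n+1} · F = p. Then for all m ∈ ℕ and all j with 0 ≤ j ≤ N − 1, the coefficient of X^{mN+j} in F equals ∑_{h=0}^{n} b_{hN+j} · C(m − h + n, n), where by convention C(m − h + n, n) = 0 when m < h. (The coefficient formula established in the proof of Theorem 1.1 of the paper.) -/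
/-!
Expanding `X ↦ X ^ N` in `(1 - X) ^ (n + 1) * ∑ₖ C(k + n, n) Xᵏ = 1` inverts
`(1 - X ^ N) ^ (n + 1)`, so `F = p * ∑ₖ C(k + n, n) X^(kN)`. Since `j < N`, the coefficient of `X^(mN + j)` in this
product only sees the coefficients `b_(hN + j)` of `p`, paired with `C(m - h + n, n)`, and the
degree bound on `p` cuts the sum off at `h = n`.
-/

open PowerSeries Finset

namespace PowerSeries

variable {R : Type*} [CommRing R]

theorem coeff_mul_expand (f g : R⟦X⟧) {N j : ℕ} (hN : N ≠ 0) (hj : j < N) (m : ℕ) :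
    coeff (m * N + j) (f * expand N hN g) =
      ∑ x ∈ antidiagonal m, coeff (x.1 * N + j) f * coeff x.2 g := by
  induction m generalizing g with
  | zero =>
    rw [eq_X_mul_shift_add_const g]
    simp [mul_add, mul_left_comm f, expand_C, coeff_X_pow_mul', Nat.not_le_of_lt hj]
  | succ m ih =>
    have hexpand : f * expand N hN g =
        X ^ N * (f * expand N hN (mk fun k => coeff (k + 1) g)) + C (constantCoeff g) * f := by
      conv_lhs => rw [eq_X_mul_shift_add_const g]
      simp only [map_add, map_mul, expand_X, expand_C]
      ring
    have hidx : (m + 1) * N + j = m * N + j + N := by ring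
    rw [hexpand, map_add, hidx, coeff_X_pow_mul, ih, coeff_C_mul, ← hidx,
      Nat.sum_antidiagonal_succ', add_comm]
    simp [coeff_mk, mul_comm]

theorem one_sub_X_pow_pow_mul_expand_eq_one (N d : ℕ) (hN : N ≠ 0) :
    (1 - X ^ N : R⟦X⟧) ^ (d + 1) * expand N hN (mk fun k => ((k + d).choose d : R)) = 1 := by
  have hpow : (1 - X ^ N : R⟦X⟧) ^ (d + 1) = expand N hN ((1 - X) ^ (d + 1)) := by
    simp only [map_pow, map_sub, map_one, expand_X]
  simp_rw [Nat.add_comm _ d]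
  rw [hpow, ← map_mul, mul_comm, mk_add_choose_mul_one_sub_pow_eq_one, map_one]

end PowerSeries

theorem Finset.Nat.sum_antidiagonal_mul_eq_sum_range_ite {R : Type*}
    [NonUnitalNonAssocSemiring R] {φ ψ : ℕ → R} {m n : ℕ}
    (hφ : ∀ h, n < h → φ h = 0) :
    ∑ x ∈ antidiagonal m, φ x.1 * ψ x.2 =
      ∑ h ∈ range (n + 1), φ h * if h ≤ m then ψ (m - h) else 0 := by
  rw [Nat.sum_antidiagonal_eq_sum_range_succ (fun a b => φ a * ψ b)]
  simp_rw [mul_ite, mul_zero]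
  rw [← sum_filter]
  refine (sum_subset (fun h => by simp) fun h hm hmn => ?_).symm
  rw [hφ h (by simp at hm hmn; omega), zero_mul]

theorem coeff_formula_general (N n : ℕ) (p : Polynomial ℚ)
    (hp : p.degree < (N * (n + 1) : ℕ)) (F : PowerSeries ℚ)
    (hF : (1 - PowerSeries.X ^ N) ^ (n + 1) * F = (p : PowerSeries ℚ))
    (m j : ℕ) (hj : j < N) :
    PowerSeries.coeff (m * N + j) F =
      ∑ h ∈ Finset.range (n + 1),
        p.coeff (h * N + j) * (if h ≤ m then ((m - h + n).choose n : ℚ) else 0) := by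
  have hN : N ≠ 0 := Nat.ne_zero_of_lt hj
  set G : ℚ⟦X⟧ := expand N hN (mk fun k => ((k + n).choose n : ℚ))
  have hFG : F = p * G := by
    calc F = F * ((1 - X ^ N) ^ (n + 1) * G) := by
          rw [one_sub_X_pow_pow_mul_expand_eq_one, mul_one]
      _ = p * G := by rw [← hF]; ring
  have hcoeff : ∀ h, n < h → p.coeff (h * N + j) = 0 := fun h hh => by
    refine Polynomial.coeff_eq_zero_of_degree_lt (hp.trans_le ?_)
    exact_mod_cast (by nlinarith : N * (n + 1) ≤ h * N + j)
  rw [hFG, coeff_mul_expand _ _ hN hj]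
  simp_rw [Polynomial.coeff_coe, coeff_mk]
  exact Nat.sum_antidiagonal_mul_eq_sum_range_ite (ψ := fun c => ((c + n).choose n : ℚ)) hcoeff

theorem coeff_formula (N n : ℕ) (hN : 1 ≤ N) (p : Polynomial ℚ)
    (hp : p.degree < (N * (n + 1) : ℕ)) (F : PowerSeries ℚ)
    (hF : (1 - PowerSeries.X ^ N) ^ (n + 1) * F = (p : PowerSeries ℚ))
    (m j : ℕ) (hj : j < N) :
    PowerSeries.coeff (m * N + j) F =
      ∑ h ∈ Finset.range (n + 1),
        p.coeff (h * N + j) * (if h ≤ m then ((m - h + n).choose n : ℚ) else 0) :=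
  coeff_formula_general N n p hp F hF m j hj
end

section
/- Let n ∈ ℕ and let m₀, m₁, …, m_n be pairwise distinct natural numbers. Then the (n+1) × (n+1) matrix over ℚ whose (i, h)-entry is the binomial coefficient C(m_i + n − h, n), for 0 ≤ i, h ≤ n, is invertible (its determinant is nonzero). (The nonsingularity claim in the proof of Theorem 1.1 of the paper; note m_i + n − h ≥ 0 since h ≤ n, and C(m_i + n − h, n) = 0 when m_i < h.) -/
open Matrix Polynomial Finset

theorem binomial_matrix_nonsingular (n : ℕ) (m : Fin (n + 1) → ℕ)
    (hm : Function.Injective m) :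
    (Matrix.of fun i h : Fin (n + 1) => ((m i + n - (h : ℕ)).choose n : ℚ)).det ≠ 0 := by
  -- D i k = descPochhammer evaluated at m i
  set D : Matrix (Fin (n+1)) (Fin (n+1)) ℚ :=
    Matrix.of (fun i k : Fin (n+1) => (descPochhammer ℚ (k:ℕ)).eval ((m i : ℚ))) with hD
  -- diagonal matrix of 1/k!
  set E : Matrix (Fin (n+1)) (Fin (n+1)) ℚ :=
    Matrix.diagonal (fun k : Fin (n+1) => ((Nat.factorial (k:ℕ) : ℚ))⁻¹) with hE
  -- lower triangular matrix
  set T : Matrix (Fin (n+1)) (Fin (n+1)) ℚ :=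
    Matrix.of (fun k h : Fin (n+1) => ((n - (h:ℕ)).choose (n - (k:ℕ)) : ℚ)) with hT
  have hB : ∀ (i k : Fin (n+1)), (D * E) i k = ((m i).choose (k:ℕ) : ℚ) := by
    intro i k
    rw [hD, hE, Matrix.mul_diagonal, Matrix.of_apply,
      descPochhammer_eval_eq_descFactorial, Nat.descFactorial_eq_factorial_mul_choose]
    push_cast
    field_simp
  have hM : (Matrix.of fun i h : Fin (n + 1) => ((m i + n - (h : ℕ)).choose n : ℚ))
      = D * E * T := by
    ext i h
    rw [Matrix.mul_apply]
    simp only [hB]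
    rw [hT]
    have hh : (h : ℕ) ≤ n := Nat.lt_succ_iff.mp h.isLt
    have : m i + n - (h : ℕ) = m i + (n - (h : ℕ)) := by omega
    rw [Matrix.of_apply, this, Nat.add_choose_eq,
      Finset.Nat.sum_antidiagonal_eq_sum_range_succ_mk, ← Fin.sum_univ_eq_sum_range]
    push_cast
    rfl
  rw [hM, Matrix.det_mul, Matrix.det_mul]
  have hDdet : D.det ≠ 0 := by
    have := Matrix.det_eval_matrixOfPolynomials_eq_det_vandermonde
      (fun i => ((m i : ℚ))) (fun k : Fin (n+1) => descPochhammer ℚ (k:ℕ))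
      (fun k => descPochhammer_natDegree ℚ (k:ℕ))
      (fun k => monic_descPochhammer ℚ (k:ℕ))
    rw [hD, ← this]
    rw [Matrix.det_vandermonde_ne_zero_iff]
    intro a b hab
    exact hm (Nat.cast_injective hab)
  have hEdet : E.det ≠ 0 := by
    rw [hE, Matrix.det_diagonal]
    exact Finset.prod_ne_zero_iff.mpr fun k _ =>
      inv_ne_zero (by exact_mod_cast (Nat.factorial_ne_zero (k:ℕ)))
  have hTdet : T.det = 1 := by
    rw [hT, Matrix.det_of_lowerTriangular]
    · refine Finset.prod_eq_one fun k _ => ?_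
      simp [Nat.choose_self]
    · intro k h hkh
      have hk : (k : ℕ) < (h : ℕ) := hkh
      have hh : (h : ℕ) ≤ n := Nat.lt_succ_iff.mp h.isLt
      have : n - (h : ℕ) < n - (k : ℕ) := by omega
      simp [Nat.choose_eq_zero_of_lt this]
  rw [hTdet, mul_one]
  exact mul_ne_zero hDdet hEdet
end

section
/- Let N ≥ 1 and n ≥ 0 be natural numbers and let A ⊆ ℕ be a finite set such that for every j with 0 ≤ j ≤ N − 1, the set A ∩ (j + Nℤ) has at least n + 1 elements. Then for every ℓ ∈ ℕ there exist rational constants c_{ℓ,k} (k ∈ A), depending only on N, n, A and ℓ, such that every F ∈ ℚ⟦X⟧ for which (1 − X^N)^{n+1} · F is a polynomial of degree < N(n+1) satisfies coeff_ℓ F = ∑_{k ∈ A} c_{ℓ,k} · coeff_k F. (The combinatorial core of Theorem 1.1 of the paper: the finitely many coefficients indexed by A determine all coefficients by a fixed linear expression.) -/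
open PowerSeries Finset
open scoped Polynomial Nat

/-! Restricting the coefficients of `F` to a residue class `j + Nℕ` turns multiplication by
`1 - X^N` into multiplication by `1 - X`, so it suffices to treat `N = 1`. There
`F = P · (1 - X)^{-(n+1)}` with `deg P ≤ n`, whose `m`-th coefficient
`∑_{a ≤ n} P_a (m + n - a).choose n` is a polynomial of degree `≤ n` in `m`. On each residue class
the coefficients are therefore values of a polynomial of degree `≤ n` at `k / N`, and Lagrange
interpolation at the `n + 1` nodes of `A` in the class of `ℓ` recovers the coefficient at `ℓ`. -/

noncomputable def choosePoly (K : Type*) [Field K] (n : ℕ) : K[X] :=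
  Polynomial.C (n ! : K)⁻¹ * descPochhammer K n

lemma eval_natCast_choosePoly {K : Type*} [Field K] [CharZero K] (n m : ℕ) :
    (choosePoly K n).eval (m : K) = m.choose n := by
  rw [choosePoly, Polynomial.eval_mul, Polynomial.eval_C, descPochhammer_eval_eq_descFactorial,
    Nat.descFactorial_eq_factorial_mul_choose, Nat.cast_mul,
    inv_mul_cancel_left₀ (by exact_mod_cast n.factorial_ne_zero)]

lemma natDegree_choosePoly_le {K : Type*} [Field K] (n : ℕ) : (choosePoly K n).natDegree ≤ n :=
  (Polynomial.natDegree_C_mul_le _ _).trans (descPochhammer_natDegree K n).le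

namespace PowerSeries

variable {R : Type*} [CommRing R]

lemma coeff_one_sub_X_pow_mul (k m : ℕ) (F : R⟦X⟧) :
    coeff m ((1 - X ^ k) * F) = coeff m F - if k ≤ m then coeff (m - k) F else 0 := by
  rw [sub_mul, one_mul, map_sub, coeff_X_pow_mul']

lemma coeff_eq_sum_choose_of_one_sub_X_pow_mul_eq {n : ℕ} {A P : R⟦X⟧}
    (hA : (1 - X) ^ (n + 1) * A = P) (hP : ∀ a, n < a → coeff a P = 0) (m : ℕ) :
    coeff m A = ∑ a ∈ range (n + 1), coeff a P * ((m + n - a).choose n : R) := by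
  set t : ℕ → R := fun a => coeff a P * ((m + n - a).choose n : R)
  -- for `m < a ≤ n` the binomial vanishes (`m + n - a < n`), so no `a ≤ m` guard is needed
  have ht : ∀ a, min m n < a → t a = 0 := by
    intro a ha
    rcases lt_or_ge n a with hna | han
    · simp only [t, hP a hna, zero_mul]
    · simp only [t, Nat.choose_eq_zero_of_lt (by omega : m + n - a < n), Nat.cast_zero, mul_zero]
  have hsum : ∀ k, min m n ≤ k → ∑ a ∈ range (k + 1), t a = ∑ a ∈ range (min m n + 1), t a :=
    fun k hk => (sum_subset (range_subset_range.2 (by omega)) fun a _ ha =>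
      ht a (by simp only [mem_range, not_lt] at ha; omega)).symm
  have hAP : A = P * mk fun k => ((n + k).choose n : R) := by
    rw [← hA, mul_comm, ← mul_assoc, mk_add_choose_mul_one_sub_pow_eq_one, one_mul]
  calc coeff m A = ∑ a ∈ range (m + 1), t a := by
        rw [hAP, coeff_mul, Nat.sum_antidiagonal_eq_sum_range_succ_mk]
        refine sum_congr rfl fun a ha => ?_
        rw [coeff_mk, show n + (m - a) = m + n - a by simp only [mem_range] at ha; omega]
    _ = ∑ a ∈ range (n + 1), t a := by rw [hsum m (min_le_left m n), hsum n (min_le_right m n)]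

lemma exists_natDegree_le_coeff_eq_eval_of_one_sub_X_pow_mul_eq {K : Type*} [Field K] [CharZero K]
    {n : ℕ} {A P : K⟦X⟧} (hA : (1 - X) ^ (n + 1) * A = P) (hP : ∀ a, n < a → coeff a P = 0) :
    ∃ Q : K[X], Q.natDegree ≤ n ∧ ∀ m : ℕ, coeff m A = Q.eval (m : K) := by
  set B : ℕ → K[X] := fun a => (choosePoly K n).comp (Polynomial.X + Polynomial.C ((n : K) - a))
  refine ⟨∑ a ∈ range (n + 1), Polynomial.C (coeff a P) * B a, ?_, fun m => ?_⟩
  · refine Polynomial.natDegree_sum_le_of_forall_le _ _ fun a _ =>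
      (Polynomial.natDegree_C_mul_le _ _).trans (Polynomial.natDegree_comp_le.trans ?_)
    rw [Polynomial.natDegree_X_add_C, mul_one]
    exact natDegree_choosePoly_le n
  · rw [coeff_eq_sum_choose_of_one_sub_X_pow_mul_eq hA hP, Polynomial.eval_finsetSum]
    refine sum_congr rfl fun a ha => ?_
    have hcast : (m : K) + ((n : K) - a) = ((m + n - a : ℕ) : K) := by
      simp only [mem_range] at ha
      rw [Nat.cast_sub (by omega)]; push_cast; ring
    rw [Polynomial.eval_mul, Polynomial.eval_C, Polynomial.eval_comp, Polynomial.eval_add,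
      Polynomial.eval_X, Polynomial.eval_C, hcast, eval_natCast_choosePoly]

noncomputable def residueSection (N j : ℕ) (F : R⟦X⟧) : R⟦X⟧ :=
  mk fun m => coeff (j + N * m) F

@[simp]
lemma coeff_residueSection (N j m : ℕ) (F : R⟦X⟧) :
    coeff m (residueSection N j F) = coeff (j + N * m) F :=
  coeff_mk _ _

lemma residueSection_one_sub_X_pow_mul {N j : ℕ} (hj : j < N) (F : R⟦X⟧) :
    residueSection N j ((1 - X ^ N) * F) = (1 - X) * residueSection N j F := by
  ext m
  rw [coeff_residueSection, coeff_one_sub_X_pow_mul, ← pow_one (X : R⟦X⟧),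
    coeff_one_sub_X_pow_mul]
  rcases m with _ | m
  · simp [hj]
  · rw [if_pos (by nlinarith), if_pos (by omega), coeff_residueSection, coeff_residueSection,
      Nat.add_sub_cancel, show j + N * (m + 1) - N = j + N * m by rw [mul_add_one]; omega]

lemma residueSection_one_sub_X_pow_pow_mul {N j : ℕ} (hj : j < N) (d : ℕ) (F : R⟦X⟧) :
    residueSection N j ((1 - X ^ N) ^ d * F) = (1 - X) ^ d * residueSection N j F := by
  induction d with
  | zero => simp
  | succ d ih =>
    rw [pow_succ', mul_assoc, residueSection_one_sub_X_pow_mul hj, ih, pow_succ', mul_assoc]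

end PowerSeries

lemma Lagrange.eval_eq_sum_eval_mul_eval_basis {K ι : Type*} [Field K] [DecidableEq ι]
    {s : Finset ι} {v : ι → K} (hvs : Set.InjOn v s) {f : K[X]} (hf : f.degree < #s) (x : K) :
    f.eval x = ∑ i ∈ s, f.eval (v i) * (Lagrange.basis s v i).eval x := by
  conv_lhs => rw [Lagrange.eq_interpolate hvs hf]
  simp only [Lagrange.interpolate_apply, Polynomial.eval_finsetSum, Polynomial.eval_mul,
    Polynomial.eval_C]

lemma exists_natDegree_le_coeff_residue_eq_eval {K : Type*} [Field K] [CharZero K] {N n j : ℕ}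
    (hj : j < N) {F : K⟦X⟧} {p : K[X]} (hp : p.degree < (N * (n + 1) : ℕ))
    (hF : (1 - X ^ N) ^ (n + 1) * F = (p : K⟦X⟧)) :
    ∃ Q : K[X], Q.natDegree ≤ n ∧ ∀ m : ℕ, coeff (j + N * m) F = Q.eval (m : K) := by
  obtain ⟨Q, hQ, hFQ⟩ := exists_natDegree_le_coeff_eq_eval_of_one_sub_X_pow_mul_eq
    (A := residueSection N j F) (P := residueSection N j p)
    (by rw [← residueSection_one_sub_X_pow_pow_mul hj, hF])
    (fun a ha => by
      rw [coeff_residueSection, Polynomial.coeff_coe]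
      exact Polynomial.coeff_eq_zero_of_degree_lt (hp.trans_le (by gcongr; nlinarith)))
  exact ⟨Q, hQ, fun m => by rw [← coeff_residueSection, hFQ]⟩

theorem finite_set_determines_coeffs (N n : ℕ) (hN : 1 ≤ N) (A : Finset ℕ)
    (hA : ∀ j < N, n + 1 ≤ (A.filter fun k => k % N = j).card) (ℓ : ℕ) :
    ∃ c : ℕ → ℚ, ∀ F : PowerSeries ℚ,
      (∃ p : Polynomial ℚ, p.degree < (N * (n + 1) : ℕ) ∧
        (1 - PowerSeries.X ^ N) ^ (n + 1) * F = (p : PowerSeries ℚ)) →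
      PowerSeries.coeff (R := ℚ) ℓ F = ∑ k ∈ A, c k * PowerSeries.coeff (R := ℚ) k F := by
  classical
  have hℓ : ℓ % N < N := Nat.mod_lt ℓ hN
  obtain ⟨s, hsA, hs_card⟩ := exists_subset_card_eq (hA (ℓ % N) hℓ)
  have hs_mod : ∀ k ∈ s, k % N = ℓ % N := fun k hk => (mem_filter.1 (hsA hk)).2
  set v : ℕ → ℚ := fun k => ((k / N : ℕ) : ℚ)
  have hv : Set.InjOn v s := fun a ha b hb hab => by
    rw [← Nat.mod_add_div a N, ← Nat.mod_add_div b N, hs_mod a ha, hs_mod b hb,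
      Nat.cast_inj.1 hab]
  refine ⟨fun k => if k ∈ s then (Lagrange.basis s v k).eval (v ℓ) else 0, ?_⟩
  rintro F ⟨p, hp, hF⟩
  obtain ⟨Q, hQ, hFQ⟩ := exists_natDegree_le_coeff_residue_eq_eval hℓ hp hF
  have hcoeff : ∀ k, k % N = ℓ % N → coeff k F = Q.eval (v k) := fun k hk => by
    rw [← hFQ, ← hk, Nat.mod_add_div]
  have hQs : Q.degree < #s := by
    rw [hs_card]
    exact (Polynomial.degree_le_of_natDegree_le hQ).trans_lt (by exact_mod_cast n.lt_succ_self)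
  calc coeff ℓ F = Q.eval (v ℓ) := hcoeff ℓ rfl
    _ = ∑ k ∈ s, Q.eval (v k) * (Lagrange.basis s v k).eval (v ℓ) :=
      Lagrange.eval_eq_sum_eval_mul_eval_basis hv hQs _
    _ = ∑ k ∈ A, (if k ∈ s then (Lagrange.basis s v k).eval (v ℓ) else 0) * coeff k F := by
      rw [← sum_subset (hsA.trans (filter_subset _ _)) fun k _ hk => by rw [if_neg hk, zero_mul]]
      exact sum_congr rfl fun k hk => by rw [if_pos hk, hcoeff k (hs_mod k hk), mul_comm]
end

section
/- Let N ≥ 1 and n ≥ 0 be natural numbers and let A ⊆ ℕ be a finite set such that for every j with 0 ≤ j ≤ N − 1, the set A ∩ (j + Nℤ) has at least n + 1 elements. Let F, G ∈ ℚ⟦X⟧ be such that (1 − X^N)^{n+1} · F and (1 − X^N)^{n+1} · G are both polynomials of degree < N(n+1). If coeff_k F = coeff_k G for all k ∈ A, then F = G. (The power-series form of Corollary 1.2 of the paper: equality of the multiplicities over A implies equality of all multiplicities.) -/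
/-!
Put `H = F - G` and fix a residue `j` modulo `N`. Because `(1 - X^N)^(n+1) * H` is a polynomial
of degree `< N(n+1)`, the `(n+1)`-st forward difference of `m ↦ coeff (j + N m) H` vanishes
identically. By the Gregory–Newton formula this sequence is then the restriction to `ℕ` of a
polynomial of degree `≤ n`; it vanishes at the `n + 1` indices coming from `A ∩ (j + Nℤ)`, so
it is zero.
-/

open Finset fwdDiff

theorem fwdDiff_iter_eq_zero_of_le {G : Type*} [AddCommGroup G] {f : ℕ → G} {n k : ℕ}
    (hf : Δ_[1] ^[n] f = 0) (hk : n ≤ k) : Δ_[1] ^[k] f = 0 := by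
  obtain ⟨i, rfl⟩ := Nat.exists_eq_add_of_le' hk
  rw [Function.iterate_add_apply, hf]
  exact Function.iterate_fixed (fwdDiff_const 1 (0 : G)) i

theorem eq_sum_range_choose_smul_fwdDiff_iter {G : Type*} [AddCommGroup G] {f : ℕ → G} {n : ℕ}
    (hf : Δ_[1] ^[n + 1] f = 0) (m : ℕ) :
    f m = ∑ k ∈ range (n + 1), m.choose k • Δ_[1] ^[k] f 0 := by
  have hvan (k : ℕ) (hk : min m n + 1 ≤ k) : m.choose k • Δ_[1] ^[k] f 0 = 0 := by
    rcases le_or_gt k m with hkm | hmk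
    · rw [fwdDiff_iter_eq_zero_of_le hf (by omega), Pi.zero_apply, smul_zero]
    · rw [Nat.choose_eq_zero_of_lt hmk, zero_smul]
  calc f m = f (0 + m • 1) := by rw [zero_add, smul_eq_mul, mul_one]
    _ = ∑ k ∈ range (m + 1), m.choose k • Δ_[1] ^[k] f 0 := shift_eq_sum_fwdDiff_iter 1 f m 0
    _ = ∑ k ∈ range (min m n + 1), m.choose k • Δ_[1] ^[k] f 0 :=
      (sum_subset (range_subset_range.mpr (by omega)) fun k _ hk ↦
        hvan k (by simp at hk; omega)).symm
    _ = _ := sum_subset (range_subset_range.mpr (by omega)) fun k _ hk ↦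
        hvan k (by simp at hk; omega)

theorem exists_natDegree_le_eval_eq_of_fwdDiff_iter_eq_zero {K : Type*} [Field K] [CharZero K]
    {f : ℕ → K} {n : ℕ} (hf : Δ_[1] ^[n + 1] f = 0) :
    ∃ P : Polynomial K, P.natDegree ≤ n ∧ ∀ m : ℕ, P.eval (m : K) = f m := by
  refine ⟨∑ k ∈ range (n + 1),
    Polynomial.C (Δ_[1] ^[k] f 0 / k.factorial) * descPochhammer K k, ?_, fun m ↦ ?_⟩
  · refine Polynomial.natDegree_sum_le_of_forall_le _ _ fun k hk ↦ ?_
    refine (Polynomial.natDegree_C_mul_le _ _).trans ?_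
    rw [descPochhammer_natDegree]
    exact Nat.lt_succ_iff.mp (mem_range.mp hk)
  · rw [eq_sum_range_choose_smul_fwdDiff_iter hf m, Polynomial.eval_finsetSum]
    refine sum_congr rfl fun k _ ↦ ?_
    rw [Polynomial.eval_mul, Polynomial.eval_C, descPochhammer_eval_eq_descFactorial,
      Nat.descFactorial_eq_factorial_mul_choose, nsmul_eq_mul, Nat.cast_mul]
    have : (k.factorial : K) ≠ 0 := Nat.cast_ne_zero.mpr k.factorial_ne_zero
    field_simp

theorem eq_zero_of_fwdDiff_iter_eq_zero_of_card_lt {K : Type*} [Field K] [CharZero K]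
    {f : ℕ → K} {n : ℕ} (hf : Δ_[1] ^[n + 1] f = 0) {s : Finset ℕ} (hs : n < s.card)
    (h0 : ∀ m ∈ s, f m = 0) : f = 0 := by
  classical
  obtain ⟨P, hPdeg, hPf⟩ := exists_natDegree_le_eval_eq_of_fwdDiff_iter_eq_zero hf
  have hP : P = 0 := by
    refine Polynomial.eq_zero_of_natDegree_lt_card_of_eval_eq_zero' P (s.image (↑)) ?_ ?_
    · simpa [hPf] using h0
    · rw [card_image_of_injective _ Nat.cast_injective]; omega
  funext m
  rw [← hPf, hP, Polynomial.eval_zero, Pi.zero_apply]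

namespace PowerSeries

theorem coeff_one_sub_X_pow_pow_mul {R : Type*} [CommRing R] (N j n m : ℕ) (H : PowerSeries R) :
    coeff (j + N * (m + n)) ((1 - X ^ N) ^ n * H) =
      Δ_[1] ^[n] (fun i ↦ coeff (j + N * i) H) m := by
  induction n generalizing m with
  | zero => simp
  | succ n ih =>
    have h₁ : j + N * (m + (n + 1)) = j + N * (m + n) + N := by ring
    have h₂ : j + N * (m + 1 + n) = j + N * (m + n) + N := by ring
    rw [pow_succ', mul_assoc, sub_mul, one_mul, map_sub, coeff_X_pow_mul', if_pos (by omega),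
      Function.iterate_succ_apply', fwdDiff, ← ih, ← ih, h₁, h₂, Nat.add_sub_cancel]

theorem fwdDiff_iter_coeff_eq_zero_of_degree_lt {R : Type*} [CommRing R] {N n : ℕ}
    {H : PowerSeries R} {r : Polynomial R} (hr : r.degree < (N * n : ℕ))
    (hH : (1 - X ^ N) ^ n * H = (r : PowerSeries R)) (j : ℕ) :
    Δ_[1] ^[n] (fun i ↦ coeff (j + N * i) H) = 0 := by
  funext m
  rw [← coeff_one_sub_X_pow_pow_mul, hH, Polynomial.coeff_coe, Pi.zero_apply]
  refine Polynomial.coeff_eq_zero_of_degree_lt (hr.trans_le ?_)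
  exact_mod_cast (by nlinarith : N * n ≤ j + N * (m + n))

end PowerSeries

theorem card_image_div_filter_mod_eq (A : Finset ℕ) (N j : ℕ) :
    ((A.filter fun k => k % N = j).image (· / N)).card = (A.filter fun k => k % N = j).card := by
  refine card_image_of_injOn fun a ha b hb hab ↦ ?_
  rw [← Nat.mod_add_div a N, ← Nat.mod_add_div b N, (mem_filter.mp ha).2, (mem_filter.mp hb).2]
  exact congrArg (j + N * ·) hab

theorem coeffs_on_A_determine_series (N n : ℕ) (hN : 1 ≤ N) (A : Finset ℕ)
    (hA : ∀ j < N, n + 1 ≤ (A.filter fun k => k % N = j).card)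
    (F G : PowerSeries ℚ)
    (hF : ∃ p : Polynomial ℚ, p.degree < (N * (n + 1) : ℕ) ∧
      (1 - PowerSeries.X ^ N) ^ (n + 1) * F = (p : PowerSeries ℚ))
    (hG : ∃ q : Polynomial ℚ, q.degree < (N * (n + 1) : ℕ) ∧
      (1 - PowerSeries.X ^ N) ^ (n + 1) * G = (q : PowerSeries ℚ))
    (h : ∀ k ∈ A, PowerSeries.coeff k F = PowerSeries.coeff k G) :
    F = G := by
  obtain ⟨p, hp, hpF⟩ := hF
  obtain ⟨q, hq, hqG⟩ := hG
  have hdeg : (p - q).degree < (N * (n + 1) : ℕ) :=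
    (Polynomial.degree_sub_le p q).trans_lt (max_lt hp hq)
  have hFG : (1 - PowerSeries.X ^ N) ^ (n + 1) * (F - G) =
      ((p - q : Polynomial ℚ) : PowerSeries ℚ) := by
    rw [mul_sub, hpF, hqG, Polynomial.coe_sub]
  rw [← sub_eq_zero]
  ext k
  have hres : (fun i ↦ PowerSeries.coeff (k % N + N * i) (F - G)) = 0 := by
    refine eq_zero_of_fwdDiff_iter_eq_zero_of_card_lt
      (PowerSeries.fwdDiff_iter_coeff_eq_zero_of_degree_lt hdeg hFG _)
      (s := (A.filter fun a => a % N = k % N).image (· / N)) ?_ ?_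
    · rw [card_image_div_filter_mod_eq]
      exact hA _ (Nat.mod_lt k hN)
    · simp only [mem_image, mem_filter]
      rintro _ ⟨a, ⟨ha, haj⟩, rfl⟩
      rw [← haj, Nat.mod_add_div, map_sub, h a ha, sub_self]
  simpa [Nat.mod_add_div] using congrFun hres (k / N)
end
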